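/- For real a > 0 and real b, (1/π) ∫_{-∞}^{∞} a·ln(b² + t²) / (a² + t²) dt = 2·ln(|b| + a). -/

import Mathlib

/-!
Put `L(x) = ∫ log (x² + t²) / (a² + t²) dt`. Since `log (x² + t²) - log t² = ∫₀ˣ 2u / (u² + t²) du`,
Fubini and partial fractions give
`L(x) - L(0) = ∫₀ˣ 2π / (a (a + u)) du = (2π / a) log ((a + x) / a)`;
the same identity also yields the integrability of `log t² / (1 + t²)`.
Finally `L(0) = 2π log a / a`: scaling `t = a s` reduces it to `∫ log s² / (1 + s²) ds = 0`,
which holds because `s ↦ 1 / s` maps the integrand on `(0, ∞)` to its negative.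
-/

open MeasureTheory Real Set Filter

lemma inv_sq_add_sq_eq_inv_sq_mul_inv_one_add_sq {a : ℝ} (ha : a ≠ 0) (t : ℝ) :
    (a ^ 2 + t ^ 2)⁻¹ = (a ^ 2)⁻¹ * (1 + (a⁻¹ * t) ^ 2)⁻¹ := by
  field_simp

lemma integrable_inv_sq_add_sq {a : ℝ} (ha : a ≠ 0) :
    Integrable fun t : ℝ => (a ^ 2 + t ^ 2)⁻¹ := by
  simp_rw [inv_sq_add_sq_eq_inv_sq_mul_inv_one_add_sq ha]
  exact (integrable_inv_one_add_sq.comp_mul_left' (inv_ne_zero ha)).const_mul _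

lemma integral_univ_inv_sq_add_sq {a : ℝ} (ha : 0 < a) :
    ∫ t : ℝ, (a ^ 2 + t ^ 2)⁻¹ = π / a := by
  simp_rw [inv_sq_add_sq_eq_inv_sq_mul_inv_one_add_sq ha.ne', integral_const_mul,
    Measure.integral_comp_inv_mul_left (fun t => (1 + t ^ 2)⁻¹), integral_univ_inv_one_add_sq,
    abs_of_pos ha, smul_eq_mul]
  field_simp

lemma integrable_inv_sq_add_sq_mul_inv_sq_add_sq {a u : ℝ} (ha : a ≠ 0) (hu : u ≠ 0) :
    Integrable fun t : ℝ => (u ^ 2 + t ^ 2)⁻¹ * (a ^ 2 + t ^ 2)⁻¹ := by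
  refine (integrable_inv_sq_add_sq ha).bdd_mul (c := (u ^ 2)⁻¹)
    (by fun_prop : Measurable fun t : ℝ => (u ^ 2 + t ^ 2)⁻¹).aestronglyMeasurable
    (Eventually.of_forall fun t => ?_)
  rw [norm_inv, Real.norm_of_nonneg (by positivity)]
  exact inv_anti₀ (by positivity) (by nlinarith)

lemma integral_two_mul_inv_sq_add_sq_mul_inv_sq_add_sq {a u : ℝ} (ha : 0 < a) (hu : 0 < u)
    (hua : u ≠ a) :
    ∫ t : ℝ, 2 * u * (u ^ 2 + t ^ 2)⁻¹ * (a ^ 2 + t ^ 2)⁻¹ = 2 * π / (a * (a + u)) := by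
  have hd : a ^ 2 - u ^ 2 ≠ 0 := fun h => hua (by nlinarith)
  have partial_fractions : ∀ t : ℝ, 2 * u * (u ^ 2 + t ^ 2)⁻¹ * (a ^ 2 + t ^ 2)⁻¹
      = 2 * u / (a ^ 2 - u ^ 2) * ((u ^ 2 + t ^ 2)⁻¹ - (a ^ 2 + t ^ 2)⁻¹) := by
    intro t
    field_simp
    ring
  simp_rw [partial_fractions]
  rw [integral_const_mul, integral_sub (integrable_inv_sq_add_sq hu.ne')
    (integrable_inv_sq_add_sq ha.ne'), integral_univ_inv_sq_add_sq ha,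
    integral_univ_inv_sq_add_sq hu]
  field_simp
  ring

lemma integral_two_mul_inv_sq_add_sq {t : ℝ} (ht : t ≠ 0) (x : ℝ) :
    ∫ u in (0 : ℝ)..x, 2 * u * (u ^ 2 + t ^ 2)⁻¹ = log (x ^ 2 + t ^ 2) - log (t ^ 2) := by
  have hpos : ∀ u : ℝ, u ^ 2 + t ^ 2 ≠ 0 := fun u => by positivity
  have hderiv : ∀ u : ℝ,
      HasDerivAt (fun v => log (v ^ 2 + t ^ 2)) (2 * u * (u ^ 2 + t ^ 2)⁻¹) u := fun u => by
    simpa [div_eq_mul_inv] using ((hasDerivAt_pow 2 u).add_const (t ^ 2)).log (hpos u)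
  rw [intervalIntegral.integral_eq_sub_of_hasDerivAt (fun u _ => hderiv u)
    (Continuous.intervalIntegrable (by fun_prop (disch := exact hpos)) _ _)]
  simp

section LogDifference

variable {a x : ℝ}

lemma setIntegral_Ioc_two_mul_inv_sq_add_sq_mul {t : ℝ} (ht : t ≠ 0) (hx : 0 ≤ x) :
    ∫ u in Ioc 0 x, 2 * u * (u ^ 2 + t ^ 2)⁻¹ * (a ^ 2 + t ^ 2)⁻¹
      = (log (x ^ 2 + t ^ 2) - log (t ^ 2)) * (a ^ 2 + t ^ 2)⁻¹ := by
  rw [integral_mul_const, ← intervalIntegral.integral_of_le hx,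
    integral_two_mul_inv_sq_add_sq ht]

lemma integrable_uncurry_two_mul_inv_sq_add_sq_mul (ha : 0 < a) :
    Integrable (Function.uncurry fun t u : ℝ => 2 * u * (u ^ 2 + t ^ 2)⁻¹ * (a ^ 2 + t ^ 2)⁻¹)
      (volume.prod (volume.restrict (Ioc 0 x))) := by
  have hmeas : AEStronglyMeasurable
      (Function.uncurry fun t u : ℝ => 2 * u * (u ^ 2 + t ^ 2)⁻¹ * (a ^ 2 + t ^ 2)⁻¹)
      (volume.prod (volume.restrict (Ioc 0 x))) :=
    (by fun_prop : Measurable _).aestronglyMeasurable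
  refine (integrable_prod_iff' hmeas).2 ⟨?_, ?_⟩
  · filter_upwards [ae_restrict_mem measurableSet_Ioc] with u hu
    simpa only [Function.uncurry_apply_pair, mul_assoc] using
      (integrable_inv_sq_add_sq_mul_inv_sq_add_sq ha.ne' hu.1.ne').const_mul (2 * u)
  · have hcont : ContinuousOn (fun u : ℝ => 2 * π / (a * (a + u))) (Icc 0 x) :=
      ContinuousOn.div continuousOn_const (by fun_prop) fun u hu => by
        have := hu.1; positivity
    refine (hcont.integrableOn_Icc.mono_set Ioc_subset_Icc_self).congr ?_
    filter_upwards [ae_restrict_mem measurableSet_Ioc,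
      ae_restrict_of_ae (Measure.ae_ne volume a)] with u hu hua
    simp_rw [Function.uncurry_apply_pair]
    rw [← integral_two_mul_inv_sq_add_sq_mul_inv_sq_add_sq ha hu.1 hua]
    refine integral_congr_ae (Eventually.of_forall fun t => ?_)
    have := hu.1
    exact (Real.norm_of_nonneg (by positivity)).symm

lemma integrable_log_sq_add_sq_sub_log_sq_mul (ha : 0 < a) (hx : 0 ≤ x) :
    Integrable fun t : ℝ => (log (x ^ 2 + t ^ 2) - log (t ^ 2)) * (a ^ 2 + t ^ 2)⁻¹ := by
  refine (integrable_uncurry_two_mul_inv_sq_add_sq_mul (x := x) ha).integral_prod_left.congr ?_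
  filter_upwards [Measure.ae_ne volume 0] with t ht
  exact setIntegral_Ioc_two_mul_inv_sq_add_sq_mul ht hx

lemma integral_log_sq_add_sq_sub_log_sq_mul (ha : 0 < a) (hx : 0 ≤ x) :
    ∫ t : ℝ, (log (x ^ 2 + t ^ 2) - log (t ^ 2)) * (a ^ 2 + t ^ 2)⁻¹
      = 2 * π / a * log ((a + x) / a) := by
  calc ∫ t : ℝ, (log (x ^ 2 + t ^ 2) - log (t ^ 2)) * (a ^ 2 + t ^ 2)⁻¹
      = ∫ t : ℝ, ∫ u in Ioc 0 x, 2 * u * (u ^ 2 + t ^ 2)⁻¹ * (a ^ 2 + t ^ 2)⁻¹ := by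
        refine integral_congr_ae ?_
        filter_upwards [Measure.ae_ne volume 0] with t ht
        exact (setIntegral_Ioc_two_mul_inv_sq_add_sq_mul ht hx).symm
    _ = ∫ u in Ioc 0 x, ∫ t : ℝ, 2 * u * (u ^ 2 + t ^ 2)⁻¹ * (a ^ 2 + t ^ 2)⁻¹ :=
        integral_integral_swap (integrable_uncurry_two_mul_inv_sq_add_sq_mul ha)
    _ = ∫ u in (0 : ℝ)..x, 2 * π / a * (a + u)⁻¹ := by
        rw [intervalIntegral.integral_of_le hx]
        refine setIntegral_congr_ae measurableSet_Ioc ?_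
        filter_upwards [Measure.ae_ne volume a] with u hua hu
        rw [integral_two_mul_inv_sq_add_sq_mul_inv_sq_add_sq ha hu.1 hua]
        field_simp
    _ = 2 * π / a * log ((a + x) / a) := by
        rw [intervalIntegral.integral_const_mul, intervalIntegral.integral_comp_add_left,
          add_zero, integral_inv_of_pos ha (by linarith)]

end LogDifference

lemma integrable_log_one_add_sq_mul_inv_one_add_sq :
    Integrable fun t : ℝ => log (1 + t ^ 2) * (1 + t ^ 2)⁻¹ := by
  have hdom : Integrable fun t : ℝ => 4 * ((1 : ℝ) + ‖t‖ ^ 2) ^ (-(3 / 2 : ℝ) / 2) :=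
    (integrable_rpow_neg_one_add_norm_sq (by norm_num)).const_mul 4
  refine hdom.mono' (by fun_prop : Measurable _).aestronglyMeasurable
    (Eventually.of_forall fun t => ?_)
  have hpos : (0 : ℝ) < 1 + t ^ 2 := by positivity
  have hlog : log (1 + t ^ 2) ≤ 4 * (1 + t ^ 2) ^ (1 / 4 : ℝ) := by
    have := log_le_rpow_div hpos.le (by norm_num : (0 : ℝ) < 1 / 4)
    linarith
  have hlog_nonneg : 0 ≤ log (1 + t ^ 2) := log_nonneg (le_add_of_nonneg_right (sq_nonneg t))
  rw [Real.norm_eq_abs, Real.norm_eq_abs, sq_abs, abs_of_nonneg (by positivity),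
    show (-(3 / 2 : ℝ) / 2) = 1 / 4 + (-1) by norm_num, rpow_add hpos, rpow_neg_one, ← mul_assoc]
  exact mul_le_mul_of_nonneg_right hlog (by positivity)

lemma integrable_log_sq_mul_inv_one_add_sq :
    Integrable fun t : ℝ => log (t ^ 2) * (1 + t ^ 2)⁻¹ := by
  have hdiff := integrable_log_sq_add_sq_sub_log_sq_mul (a := 1) one_pos zero_le_one
  simp only [one_pow] at hdiff
  refine (integrable_log_one_add_sq_mul_inv_one_add_sq.sub hdiff).congr
    (Eventually.of_forall fun t => ?_)
  simp only [Pi.sub_apply]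
  ring

lemma integral_log_sq_mul_inv_one_add_sq :
    ∫ t : ℝ, log (t ^ 2) * (1 + t ^ 2)⁻¹ = 0 := by
  set f : ℝ → ℝ := fun s => log (s ^ 2) * (1 + s ^ 2)⁻¹
  have hneg_self : ∫ s in Ioi 0, f s = -∫ s in Ioi 0, f s := by
    rw [← integral_neg, ← integral_comp_rpow_Ioi f (p := -1) (by norm_num)]
    refine setIntegral_congr_fun measurableSet_Ioi fun s (hs : 0 < s) => ?_
    have : s ^ (-1 - 1 : ℝ) = (s ^ 2)⁻¹ := by
      rw [show (-1 - 1 : ℝ) = -(2 : ℕ) by norm_num, rpow_neg hs.le, rpow_natCast]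
    simp only [f, this, rpow_neg_one, inv_pow, log_inv, abs_neg, abs_one, one_mul, smul_eq_mul]
    field_simp
    ring
  have hhalf : ∫ s in Ioi 0, f s = 0 := by linarith
  simpa only [f, sq_abs, hhalf, mul_zero] using integral_comp_abs (f := f)

section Scaling

variable {a : ℝ}

lemma log_sq_mul_inv_sq_add_sq_comp_mul (ha : a ≠ 0) {s : ℝ} (hs : s ≠ 0) :
    log ((a * s) ^ 2) * (a ^ 2 + (a * s) ^ 2)⁻¹
      = (a ^ 2)⁻¹ * (log (a ^ 2) * (1 + s ^ 2)⁻¹ + log (s ^ 2) * (1 + s ^ 2)⁻¹) := by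
  rw [mul_pow, log_mul (by positivity) (by positivity)]
  field_simp

lemma integrable_log_sq_mul_inv_sq_add_sq (ha : a ≠ 0) :
    Integrable fun t : ℝ => log (t ^ 2) * (a ^ 2 + t ^ 2)⁻¹ := by
  rw [← integrable_comp_mul_left_iff _ ha]
  refine (((integrable_inv_one_add_sq.const_mul (log (a ^ 2))).add
    integrable_log_sq_mul_inv_one_add_sq).const_mul (a ^ 2)⁻¹).congr ?_
  filter_upwards [Measure.ae_ne volume 0] with s hs
  exact (log_sq_mul_inv_sq_add_sq_comp_mul ha hs).symm

lemma integral_log_sq_mul_inv_sq_add_sq (ha : 0 < a) :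
    ∫ t : ℝ, log (t ^ 2) * (a ^ 2 + t ^ 2)⁻¹ = 2 * π * log a / a := by
  have hscale : ∫ t : ℝ, log (t ^ 2) * (a ^ 2 + t ^ 2)⁻¹
      = a * ∫ s : ℝ, log ((a * s) ^ 2) * (a ^ 2 + (a * s) ^ 2)⁻¹ := by
    rw [Measure.integral_comp_mul_left (fun t => log (t ^ 2) * (a ^ 2 + t ^ 2)⁻¹),
      abs_of_pos (inv_pos.2 ha), smul_eq_mul, mul_inv_cancel_left₀ ha.ne']
  rw [hscale, integral_congr_ae ((Measure.ae_ne volume 0).mono fun s hs =>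
      log_sq_mul_inv_sq_add_sq_comp_mul ha.ne' hs), integral_const_mul,
    integral_add (integrable_inv_one_add_sq.const_mul _) integrable_log_sq_mul_inv_one_add_sq,
    integral_const_mul, integral_univ_inv_one_add_sq, integral_log_sq_mul_inv_one_add_sq, log_pow]
  field_simp
  push_cast
  ring

end Scaling

theorem poisson_log_quadratic (a b : ℝ) (ha : 0 < a) :
    (1 / π) * ∫ t : ℝ, a * Real.log (b ^ 2 + t ^ 2) / (a ^ 2 + t ^ 2)
      = 2 * Real.log (|b| + a) := by
  have hsplit : ∀ t : ℝ, a * log (b ^ 2 + t ^ 2) / (a ^ 2 + t ^ 2)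
      = a * ((log (|b| ^ 2 + t ^ 2) - log (t ^ 2)) * (a ^ 2 + t ^ 2)⁻¹
        + log (t ^ 2) * (a ^ 2 + t ^ 2)⁻¹) := fun t => by
    rw [sq_abs]
    ring
  simp_rw [hsplit]
  rw [integral_const_mul, integral_add (integrable_log_sq_add_sq_sub_log_sq_mul ha (abs_nonneg b))
      (integrable_log_sq_mul_inv_sq_add_sq ha.ne'),
    integral_log_sq_add_sq_sub_log_sq_mul ha (abs_nonneg b), integral_log_sq_mul_inv_sq_add_sq ha,
    log_div (by positivity) ha.ne', add_comm |b| a]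
  field_simp
  ring
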